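/- Let n ≥ 1 and let d1, d2 be partitions of size 2n+1 such that the number of parts of d1 is odd, d2 has at least one part greater than or equal to 2 (so that ∇(d2) is nonempty), and ∇(d1) = (∇(d2))^-. Then d1 and d2 have the same B-collapse. -/
import Mathlib


/-!
Partitions (Young diagrams) are represented as antitone, eventually-zero
functions `f : ℕ → ℕ`, where `f i` is the length of the `(i+1)`-st row.
-/

/-- `f : ℕ → ℕ` represents a partition (Young diagram). -/
def IsPartition (f : ℕ → ℕ) : Prop :=
  Antitone f ∧ ∃ N, ∀ i, N ≤ i → f i = 0

/-- The size of a partition: the sum of its parts. -/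
noncomputable def size (f : ℕ → ℕ) : ℕ := ∑' i, f i

/-- The sum of the `k` largest parts of a partition. -/
def psum (f : ℕ → ℕ) (k : ℕ) : ℕ := ∑ i ∈ Finset.range k, f i

/-- The multiplicity with which `p` occurs as a part. -/
noncomputable def mult (f : ℕ → ℕ) (p : ℕ) : ℕ := {i | f i = p}.ncard

/-- The transpose (conjugate) partition: `transpose f i` is the length of the
`(i+1)`-st column of `f`. -/
noncomputable def transpose (f : ℕ → ℕ) : ℕ → ℕ := fun i => {j | i < f j}.ncard

/-- The number of parts of a partition (the length of its first column). -/
noncomputable def numParts (f : ℕ → ℕ) : ℕ := {j | 0 < f j}.ncard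

/-- Type B: odd size, and every (positive) even part occurs with even multiplicity. -/
def IsTypeB (f : ℕ → ℕ) : Prop :=
  IsPartition f ∧ Odd (size f) ∧ ∀ p, 0 < p → Even p → Even (mult f p)

/-- Type C: even size, and every odd part occurs with even multiplicity. -/
def IsTypeC (f : ℕ → ℕ) : Prop :=
  IsPartition f ∧ Even (size f) ∧ ∀ p, Odd p → Even (mult f p)

/-- Type D: even size, and every (positive) even part occurs with even multiplicity. -/
def IsTypeD (f : ℕ → ℕ) : Prop :=
  IsPartition f ∧ Even (size f) ∧ ∀ p, 0 < p → Even p → Even (mult f p)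

/-- Dominance order `f ≼ g` between partitions of the same size. -/
def Dom (f g : ℕ → ℕ) : Prop :=
  size f = size g ∧ ∀ k, psum f k ≤ psum g k

/-- `c` is the X-collapse of `d`, where predicate `T` expresses "type X": `c` is
the greatest type-X partition of the same size dominated by `d`. -/
def IsCollapse (T : (ℕ → ℕ) → Prop) (d c : ℕ → ℕ) : Prop :=
  T c ∧ Dom c d ∧ ∀ e, T e → Dom e d → Dom e c

open Classical in
/-- The X-collapse of `d` (junk value if it does not exist). -/
noncomputable def collapse (T : (ℕ → ℕ) → Prop) (d : ℕ → ℕ) : ℕ → ℕ :=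
  if h : ∃ c, IsCollapse T d c then h.choose else fun _ => 0

/-- The B-collapse. -/
noncomputable def collapseB : (ℕ → ℕ) → ℕ → ℕ := collapse IsTypeB

/-- The C-collapse. -/
noncomputable def collapseC : (ℕ → ℕ) → ℕ → ℕ := collapse IsTypeC

/-- The D-collapse. -/
noncomputable def collapseD : (ℕ → ℕ) → ℕ → ℕ := collapse IsTypeD

/-- `d⁺`: add one box to the first row. -/
def boxPlus (f : ℕ → ℕ) : ℕ → ℕ := fun i => if i = 0 then f 0 + 1 else f i

/-- `d⁻`: remove one box from the last row (for nonempty `d`). -/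
noncomputable def boxMinus (f : ℕ → ℕ) : ℕ → ℕ :=
  fun i => if i = numParts f - 1 then f i - 1 else f i

/-- `∇(d)`: remove the first column (every part decreased by 1). -/
def delCol (f : ℕ → ℕ) : ℕ → ℕ := fun i => f i - 1

/-- `∇̌(d)`: remove the first row (delete one largest part). -/
def delRow (f : ℕ → ℕ) : ℕ → ℕ := fun i => f (i + 1)

/-- The metaplectic Lusztig–Spaltenstein map: the D-collapse of the transpose. -/
noncomputable def mLS (d : ℕ → ℕ) : ℕ → ℕ := collapseD (transpose d)

/-- The map `d̃_SP`: the C-collapse of `(e⁺)⁻`. -/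
noncomputable def mSP (e : ℕ → ℕ) : ℕ → ℕ := collapseC (boxMinus (boxPlus e))

/-- The metaplectic Barbasch–Vogan duality. -/
noncomputable def mBV (d : ℕ → ℕ) : ℕ → ℕ := mSP (mLS d)


section Helpers

lemma lowerSet_mem_iff {S : Set ℕ} (hfin : S.Finite)
    (hlow : ∀ ⦃i j : ℕ⦄, i ≤ j → j ∈ S → i ∈ S) (j : ℕ) : j ∈ S ↔ j < S.ncard := by
  constructor
  · intro hj
    have hsub : (↑(Finset.range (j + 1)) : Set ℕ) ⊆ S := by
      intro i hi
      simp only [Finset.coe_range, Set.mem_Iio] at hi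
      exact hlow (Nat.lt_succ_iff.mp hi) hj
    have h := Set.ncard_le_ncard hsub hfin
    rwa [Set.ncard_coe_finset, Finset.card_range, Nat.succ_le_iff] at h
  · intro hj
    by_contra hjS
    have hsub : S ⊆ (↑(Finset.range j) : Set ℕ) := by
      intro i hi
      simp only [Finset.coe_range, Set.mem_Iio]
      by_contra hij
      exact hjS (hlow (Nat.le_of_not_lt hij) hi)
    have h := Set.ncard_le_ncard hsub (Finset.range j).finite_toSet
    rw [Set.ncard_coe_finset, Finset.card_range] at h
    omega

lemma pos_iff_lt_numParts {f : ℕ → ℕ} (hf : IsPartition f) (j : ℕ) :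
    0 < f j ↔ j < numParts f := by
  obtain ⟨hanti, N, hN⟩ := hf
  have h := lowerSet_mem_iff (S := {j | 0 < f j})
    (Set.Finite.subset (Set.finite_Iio N) (by
      intro i hi
      simp only [Set.mem_setOf_eq] at hi
      simp only [Set.mem_Iio]
      by_contra h
      have := hN i (Nat.le_of_not_lt h)
      omega))
    (by
      intro i j hij hj
      simp only [Set.mem_setOf_eq] at *
      exact lt_of_lt_of_le hj (hanti hij)) j
  exact h

lemma psum_succ (f : ℕ → ℕ) (k : ℕ) : psum f (k + 1) = psum f k + f k :=
  Finset.sum_range_succ f k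

lemma psum_mono (f : ℕ → ℕ) {k l : ℕ} (h : k ≤ l) : psum f k ≤ psum f l :=
  Finset.sum_le_sum_of_subset (Finset.range_subset_range.mpr h)

lemma size_eq_psum {f : ℕ → ℕ} (hf : IsPartition f) {k : ℕ} (hk : numParts f ≤ k) :
    size f = psum f k := by
  show ∑' i, f i = ∑ i ∈ Finset.range k, f i
  refine tsum_eq_sum (s := Finset.range k) (f := f) ?_
  intro i hi
  rw [Finset.mem_range] at hi
  have h := pos_iff_lt_numParts hf i
  omega

lemma psum_le_size {f : ℕ → ℕ} (hf : IsPartition f) (k : ℕ) : psum f k ≤ size f :=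
  calc psum f k ≤ psum f (max k (numParts f)) := psum_mono f (le_max_left _ _)
  _ = size f := (size_eq_psum hf (le_max_right _ _)).symm

lemma psum_add_le {f : ℕ → ℕ} (hf : IsPartition f) {k l : ℕ} (hkl : k ≤ l)
    (hl : l ≤ numParts f) : psum f k + (l - k) ≤ psum f l := by
  have hsplit : psum f k + ∑ i ∈ Finset.Ico k l, f i = psum f l :=
    Finset.sum_range_add_sum_Ico f hkl
  have h2 : l - k ≤ ∑ i ∈ Finset.Ico k l, f i := by
    calc l - k = ∑ _i ∈ Finset.Ico k l, 1 := by
          rw [Finset.sum_const, Nat.card_Ico, smul_eq_mul, mul_one]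
    _ ≤ _ := by
      refine Finset.sum_le_sum ?_
      intro i hi
      have hil : i < l := (Finset.mem_Ico.mp hi).2
      have := (pos_iff_lt_numParts hf i).mpr (lt_of_lt_of_le hil hl)
      omega
  omega

lemma sum_sub_one {f : ℕ → ℕ} (hf : IsPartition f) {K : ℕ} (hK : numParts f ≤ K) :
    (∑ i ∈ Finset.range K, f i) = (∑ i ∈ Finset.range K, (f i - 1)) + numParts f := by
  have hpos := fun i => pos_iff_lt_numParts hf i
  calc ∑ i ∈ Finset.range K, f i
      = ∑ i ∈ Finset.range K, ((f i - 1) + if i < numParts f then 1 else 0) := by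
        refine Finset.sum_congr rfl ?_
        intro i _
        rcases Nat.lt_or_ge i (numParts f) with h | h
        · have h0 : 0 < f i := (hpos i).mpr h
          simp only [if_pos h]
          omega
        · have h0 : ¬ 0 < f i := fun hc => by have := (hpos i).mp hc; omega
          simp only [if_neg (Nat.not_lt.mpr h)]
          omega
    _ = (∑ i ∈ Finset.range K, (f i - 1))
        + ∑ i ∈ Finset.range K, (if i < numParts f then 1 else 0) :=
        Finset.sum_add_distrib
    _ = (∑ i ∈ Finset.range K, (f i - 1)) + numParts f := by
        congr 1
        rw [← Finset.sum_subset (Finset.range_subset_range.mpr hK)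
          (fun x _ hx => by rw [Finset.mem_range] at hx; simp [if_neg hx])]
        rw [Finset.sum_congr rfl (fun i hi => if_pos (Finset.mem_range.mp hi)),
          Finset.sum_const, Finset.card_range, smul_eq_mul, mul_one]

lemma odd_numParts {e : ℕ → ℕ} (he : IsTypeB e) : Odd (numParts e) := by
  obtain ⟨hpe, hodd, hmul⟩ := he
  have hpos := fun i => pos_iff_lt_numParts hpe i
  set N := numParts e with hN
  have hsize : size e = ∑ i ∈ Finset.range N, e i := size_eq_psum hpe le_rfl
  rw [hsize, Finset.odd_sum_iff_odd_card_odd] at hodd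
  -- the even-valued rows come in even number
  have h3 : Even (((Finset.range N).filter (fun i => ¬ Odd (e i))).card) := by
    set F := (Finset.range N).filter (fun i => ¬ Odd (e i)) with hF
    have hcard : F.card = ∑ p ∈ F.image e, (F.filter (fun i => e i = p)).card :=
      Finset.card_eq_sum_card_fiberwise (fun x hx => Finset.mem_image_of_mem e hx)
    rw [hcard]
    refine Finset.even_sum _ ?_
    intro p hp
    obtain ⟨i, hi, rfl⟩ := Finset.mem_image.mp hp
    have hiN : i ∈ Finset.range N := (Finset.mem_filter.mp hi).1
    have hie : ¬ Odd (e i) := (Finset.mem_filter.mp hi).2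
    have hipos : 0 < e i := (hpos i).mpr (Finset.mem_range.mp hiN)
    have hmult : mult e (e i) = (F.filter (fun j => e j = e i)).card := by
      rw [mult]
      have hseteq : {j | e j = e i} = ↑(F.filter (fun j => e j = e i)) := by
        ext j
        simp only [Set.mem_setOf_eq, Finset.coe_filter, hF, Finset.mem_filter,
          Finset.mem_range]
        constructor
        · intro hj
          refine ⟨⟨?_, ?_⟩, hj⟩
          · have : 0 < e j := hj ▸ hipos
            exact (hpos j).mp this
          · rw [hj]; exact hie
        · tauto
      rw [hseteq, Set.ncard_coe_finset]
    rw [← hmult]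
    exact hmul (e i) hipos (Nat.not_odd_iff_even.mp hie)
  have h4 := Finset.card_filter_add_card_filter_not
    (s := Finset.range N) (p := fun i => Odd (e i))
  rw [Finset.card_range] at h4
  rw [Nat.odd_iff] at hodd ⊢
  rw [Nat.even_iff] at h3
  omega

end Helpers
/-- let `n ≥ 1` and let `d₁, d₂` be partitions of size `2n+1`
with `d₁` having an odd number of parts, `d₂` having at least one part `≥ 2`,
and `∇(d₁) = (∇(d₂))⁻`. Then `d₁` and `d₂` have the same B-collapse. -/
theorem stmt_12 (n : ℕ) (hn : 1 ≤ n) (d₁ d₂ : ℕ → ℕ)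
    (hd₁ : IsPartition d₁) (hd₂ : IsPartition d₂)
    (hsize₁ : size d₁ = 2 * n + 1) (hsize₂ : size d₂ = 2 * n + 1)
    (hodd : Odd (numParts d₁)) (hbig : ∃ i, 2 ≤ d₂ i)
    (hnab : delCol d₁ = boxMinus (delCol d₂)) :
    collapseB d₁ = collapseB d₂ := by
  classical
  set N₁ := numParts d₁ with hN₁def
  set N₂ := numParts d₂ with hN₂def
  set M := numParts (delCol d₂) with hMdef
  have hpos₁ : ∀ i, 0 < d₁ i ↔ i < N₁ := fun i => pos_iff_lt_numParts hd₁ i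
  have hpos₂ : ∀ i, 0 < d₂ i ↔ i < N₂ := fun i => pos_iff_lt_numParts hd₂ i
  -- characterization of M
  have hposM : ∀ i, 1 < d₂ i ↔ i < M := by
    have hfin : ({j | 0 < delCol d₂ j} : Set ℕ).Finite := by
      obtain ⟨hanti, N, hN⟩ := hd₂
      refine Set.Finite.subset (Set.finite_Iio N) ?_
      intro j hj
      simp only [Set.mem_setOf_eq, delCol] at hj
      simp only [Set.mem_Iio]
      by_contra h
      have := hN j (Nat.le_of_not_lt h)
      omega
    have hlow : ∀ ⦃i j : ℕ⦄, i ≤ j → j ∈ {j | 0 < delCol d₂ j} →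
        i ∈ {j | 0 < delCol d₂ j} := by
      intro i j hij hj
      simp only [Set.mem_setOf_eq, delCol] at *
      have := hd₂.1 hij
      omega
    intro i
    have h := lowerSet_mem_iff hfin hlow i
    rw [show ({j | 0 < delCol d₂ j} : Set ℕ).ncard = M from rfl] at h
    simp only [Set.mem_setOf_eq, delCol] at h
    omega
  -- pointwise relation between d₁ and d₂
  have hab : ∀ i, d₁ i - 1 = if i = M - 1 then d₂ i - 2 else d₂ i - 1 := by
    intro i
    have h := congrFun hnab i
    simp only [delCol, boxMinus] at h
    rw [← hMdef] at h
    split_ifs with hi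
    · rw [if_pos hi] at h; omega
    · rw [if_neg hi] at h; omega
  have hM1 : 1 ≤ M := by
    obtain ⟨i, hi⟩ := hbig
    have := (hposM i).mp (by omega)
    omega
  have hMN : M ≤ N₂ := by
    have h1 : 1 < d₂ (M - 1) := (hposM (M - 1)).mpr (by omega)
    have h2 : M - 1 < N₂ := (hpos₂ (M - 1)).mp (by omega)
    omega
  -- size bookkeeping: N₁ = N₂ + 1
  set K := N₁ + N₂ + M + 1 with hKdef
  have hsum₁ : 2 * n + 1 = (∑ i ∈ Finset.range K, (d₁ i - 1)) + N₁ := by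
    rw [← hsize₁, size_eq_psum hd₁ (show numParts d₁ ≤ K by omega)]
    exact sum_sub_one hd₁ (show numParts d₁ ≤ K by omega)
  have hsum₂ : 2 * n + 1 = (∑ i ∈ Finset.range K, (d₂ i - 1)) + N₂ := by
    rw [← hsize₂, size_eq_psum hd₂ (show numParts d₂ ≤ K by omega)]
    exact sum_sub_one hd₂ (show numParts d₂ ≤ K by omega)
  have hT : (∑ i ∈ Finset.range K, (d₁ i - 1)) + 1 = ∑ i ∈ Finset.range K, (d₂ i - 1) := by
    have hmem : M - 1 ∈ Finset.range K := by
      rw [Finset.mem_range]; omega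
    rw [← Finset.add_sum_erase _ (fun i => d₁ i - 1) hmem,
      ← Finset.add_sum_erase _ (fun i => d₂ i - 1) hmem]
    have hsame : ∑ i ∈ (Finset.range K).erase (M - 1), (d₁ i - 1)
        = ∑ i ∈ (Finset.range K).erase (M - 1), (d₂ i - 1) := by
      refine Finset.sum_congr rfl ?_
      intro i hi
      have hne : i ≠ M - 1 := (Finset.mem_erase.mp hi).1
      have h := hab i
      rw [if_neg hne] at h
      exact h
    have h1 := hab (M - 1)
    rw [if_pos rfl] at h1
    have h2 : 1 < d₂ (M - 1) := (hposM (M - 1)).mpr (by omega)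
    omega
  have hN12 : N₁ = N₂ + 1 := by omega
  -- pointwise facts
  have hlt : ∀ i, i < M - 1 → d₁ i = d₂ i := by
    intro i hi
    have h := hab i
    rw [if_neg (by omega)] at h
    have h2 : 1 < d₂ i := (hposM i).mpr (by omega)
    omega
  have hat : d₁ (M - 1) = d₂ (M - 1) - 1 := by
    have h := hab (M - 1)
    rw [if_pos rfl] at h
    have h2 : 1 < d₂ (M - 1) := (hposM (M - 1)).mpr (by omega)
    have h3 : 0 < d₁ (M - 1) := (hpos₁ (M - 1)).mpr (by omega)
    omega
  have hone₂ : ∀ i, M ≤ i → i < N₂ → d₂ i = 1 := by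
    intro i hMi hiN
    have h1 : ¬ 1 < d₂ i := fun hc => by have := (hposM i).mp hc; omega
    have h2 : 0 < d₂ i := (hpos₂ i).mpr hiN
    omega
  have hone₁ : ∀ i, M ≤ i → i < N₁ → d₁ i = 1 := by
    intro i hMi hiN
    have h := hab i
    rw [if_neg (by omega)] at h
    have h1 : ¬ 1 < d₂ i := fun hc => by have := (hposM i).mp hc; omega
    have h2 : 0 < d₁ i := (hpos₁ i).mpr hiN
    omega
  -- partial sums relations
  have hP1 : ∀ k, k ≤ M - 1 → psum d₁ k = psum d₂ k := by
    intro k hk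
    refine Finset.sum_congr rfl ?_
    intro i hi
    rw [Finset.mem_range] at hi
    exact hlt i (by omega)
  have hP2 : ∀ j, M + j ≤ N₂ → psum d₁ (M + j) + 1 = psum d₂ (M + j) := by
    intro j
    induction j with
    | zero =>
      intro _
      have hM' : M = (M - 1) + 1 := by omega
      rw [Nat.add_zero, hM', psum_succ, psum_succ]
      have hpp := hP1 (M - 1) le_rfl
      have h2 : 1 < d₂ (M - 1) := (hposM (M - 1)).mpr (by omega)
      omega
    | succ j ih =>
      intro h
      have hih := ih (by omega)
      rw [show M + (j + 1) = (M + j) + 1 by ring, psum_succ, psum_succ]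
      have h1 : d₂ (M + j) = 1 := hone₂ (M + j) (by omega) (by omega)
      have h2 : d₁ (M + j) = 1 := hone₁ (M + j) (by omega) (by omega)
      omega
  have hP2' : ∀ k, M ≤ k → k ≤ N₂ → psum d₁ k + 1 = psum d₂ k := by
    intro k h1 h2
    have := hP2 (k - M) (by omega)
    rwa [show M + (k - M) = k by omega] at this
  have hP3 : ∀ k, N₂ < k → psum d₁ k = psum d₂ k := by
    intro k hk
    rw [← size_eq_psum hd₁ (show numParts d₁ ≤ k by omega),
      ← size_eq_psum hd₂ (show numParts d₂ ≤ k by omega), hsize₁, hsize₂]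
  have hle : ∀ k, psum d₁ k ≤ psum d₂ k := by
    intro k
    rcases Nat.lt_or_ge k M with h | h
    · rw [hP1 k (by omega)]
    · rcases le_or_gt k N₂ with h2 | h2
      · have := hP2' k h h2; omega
      · rw [hP3 k h2]
  -- ones in the tail of d₂
  have hones : ∀ k, M ≤ k → k ≤ N₂ → psum d₂ N₂ = psum d₂ k + (N₂ - k) := by
    intro k hMk hkN
    have : ∀ j, k + j ≤ N₂ → psum d₂ (k + j) = psum d₂ k + j := by
      intro j
      induction j with
      | zero => intro _; simp
      | succ j ih =>
        intro h
        have hih := ih (by omega)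
        rw [show k + (j + 1) = (k + j) + 1 by ring, psum_succ]
        have h1 : d₂ (k + j) = 1 := hone₂ (k + j) (by omega) (by omega)
        omega
    have := this (N₂ - k) (by omega)
    rwa [show k + (N₂ - k) = N₂ by omega] at this
  have hEvenN₂ : Even N₂ := by
    rw [Nat.even_iff]
    rw [Nat.odd_iff] at hodd
    omega
  -- key equivalence
  have hiff : ∀ e, IsTypeB e → (Dom e d₁ ↔ Dom e d₂) := by
    intro e he
    have hsize_eq : size d₁ = size d₂ := by rw [hsize₁, hsize₂]
    constructor
    · rintro ⟨hs, hp⟩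
      exact ⟨hs.trans hsize_eq, fun k => (hp k).trans (hle k)⟩
    · rintro ⟨hs, hp⟩
      have hNe : Odd (numParts e) := odd_numParts he
      set Ne := numParts e with hNedef
      have hA : N₂ + 1 ≤ Ne := by
        have hge : N₂ ≤ Ne := by
          by_contra hcon
          push_neg at hcon
          have h1 : size e = psum e Ne := size_eq_psum he.1 le_rfl
          have h2 : psum e Ne ≤ psum e (N₂ - 1) := psum_mono e (by omega)
          have h3 : psum e (N₂ - 1) ≤ psum d₂ (N₂ - 1) := hp _
          have h4 : psum d₂ (N₂ - 1) + d₂ (N₂ - 1) = psum d₂ N₂ := by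
            have := psum_succ d₂ (N₂ - 1)
            rw [show N₂ - 1 + 1 = N₂ by omega] at this
            omega
          have h5 : 0 < d₂ (N₂ - 1) := (hpos₂ _).mpr (by omega)
          have h6 : psum d₂ N₂ ≤ size d₂ := psum_le_size hd₂ _
          omega
        rw [Nat.odd_iff] at hNe
        rw [Nat.even_iff] at hEvenN₂
        omega
      refine ⟨hs.trans hsize_eq.symm, fun k => ?_⟩
      rcases Nat.lt_or_ge k M with hk1 | hk1
      · rw [hP1 k (by omega)]
        exact hp k
      · rcases le_or_gt k N₂ with hk2 | hk2
        · have h1 : psum d₁ k + 1 = psum d₂ k := hP2' k hk1 hk2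
          have h2 : psum e k + (Ne - k) ≤ psum e Ne :=
            psum_add_le he.1 (by omega) le_rfl
          have h3 : size e = psum e Ne := size_eq_psum he.1 le_rfl
          have h4 : psum d₂ N₂ = psum d₂ k + (N₂ - k) := hones k hk1 hk2
          have h5 : size d₂ = psum d₂ N₂ := size_eq_psum hd₂ le_rfl
          omega
        · rw [hP3 k hk2]
          exact hp k
  -- conclude
  have hcoll : IsCollapse IsTypeB d₁ = IsCollapse IsTypeB d₂ := by
    funext c
    refine propext ?_
    constructor
    · rintro ⟨hTc, hdom, hmax⟩
      exact ⟨hTc, (hiff c hTc).mp hdom,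
        fun e hTe hde => hmax e hTe ((hiff e hTe).mpr hde)⟩
    · rintro ⟨hTc, hdom, hmax⟩
      exact ⟨hTc, (hiff c hTc).mpr hdom,
        fun e hTe hde => hmax e hTe ((hiff e hTe).mp hde)⟩
  show collapse IsTypeB d₁ = collapse IsTypeB d₂
  unfold collapse
  rw [hcoll]
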